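/- arXiv:2511.11553 — 3 statements merged into one kernel-verified Lean document; each statement's English description precedes it below -/
import Mathlib

section
/- Let V be symmetric with unit eigenvector v_k (eigenvalue λ_k), and let F = (1/n)𝟙𝟙ᵀ ⊗ (I − v_kv_kᵀ)V − I_n ⊗ (v_kᵀVv_k·I + v_kv_kᵀV). Then each vector p^ℓ having v_k in its ℓ-th block and zeros elsewhere satisfies F p^ℓ = −2λ_k p^ℓ. -/
/-!
In block coordinates `p^ℓ = vec (v_k e_ℓᵀ)`, and a Kronecker product acts on such a pure tensor
factorwise: `(B ⊗ A) vec (v wᵀ) = vec ((A v) (B w)ᵀ)`. The consensus term vanishes because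
`(I − v_k v_kᵀ) V v_k = λ_k (v_k − v_k) = 0`, while `(λ_k I + λ_k v_k v_kᵀ) v_k = 2 λ_k v_k`.
-/

open Matrix Kronecker

namespace Matrix

theorem kronecker_mulVec_vec_vecMulVec {l m n p R : Type*} [CommSemiring R] [Fintype m]
    [Fintype n] (A : Matrix l m R) (B : Matrix p n R) (v : m → R) (w : n → R) :
    (B ⊗ₖ A) *ᵥ vec (vecMulVec v w) = vec (vecMulVec (A *ᵥ v) (B *ᵥ w)) := by
  rw [kronecker_mulVec_vec, mul_vecMulVec, vecMulVec_mul, vecMul_transpose]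

section UnitVector

variable {d : Type*} [Fintype d] {v : d → ℝ}

theorem vecMulVec_self_mulVec_self (hv : v ⬝ᵥ v = 1) : vecMulVec v v *ᵥ v = v := by
  rw [vecMulVec_mulVec, hv, MulOpposite.op_one, one_smul]

theorem one_sub_vecMulVec_self_mul_mulVec_eigenvector [DecidableEq d] (hv : v ⬝ᵥ v = 1)
    {V : Matrix d d ℝ} {μ : ℝ} (hVv : V *ᵥ v = μ • v) :
    ((1 - vecMulVec v v) * V) *ᵥ v = 0 := by
  rw [← mulVec_mulVec, hVv, mulVec_smul, sub_mulVec, one_mulVec, vecMulVec_self_mulVec_self hv,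
    sub_self, smul_zero]

theorem smul_one_add_smul_vecMulVec_self_mulVec [DecidableEq d] (hv : v ⬝ᵥ v = 1) (μ : ℝ) :
    (μ • (1 : Matrix d d ℝ) + μ • vecMulVec v v) *ᵥ v = (2 * μ) • v := by
  rw [add_mulVec, smul_mulVec, smul_mulVec, one_mulVec, vecMulVec_self_mulVec_self hv, mul_smul,
    two_smul]

end UnitVector

end Matrix

theorem jacobian_first_class_eigenvectors_general {d n : ℕ} (V : Matrix (Fin d) (Fin d) ℝ)
    (vk : Fin d → ℝ) (hvk : vk ⬝ᵥ vk = 1) (lamk : ℝ)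
    (heig : V.mulVec vk = lamk • vk) (l : Fin n) :
    let F : Matrix (Fin n × Fin d) (Fin n × Fin d) ℝ :=
      (((1 : ℝ) / n) • (Matrix.of fun _ _ => (1 : ℝ) : Matrix (Fin n) (Fin n) ℝ)) ⊗ₖ
          (((1 : Matrix (Fin d) (Fin d) ℝ) - vecMulVec vk vk) * V) -
        (1 : Matrix (Fin n) (Fin n) ℝ) ⊗ₖ
          (lamk • (1 : Matrix (Fin d) (Fin d) ℝ) + lamk • vecMulVec vk vk)
    let p : Fin n × Fin d → ℝ := fun q => if q.1 = l then vk q.2 else 0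
    F.mulVec p = (-2 * lamk) • p := by
  intro F p
  have hp : p = vec (vecMulVec vk (Pi.single l 1)) := by
    ext ⟨i, j⟩
    by_cases hi : i = l <;> simp [p, hi, vecMulVec_apply]
  rw [hp, sub_mulVec, kronecker_mulVec_vec_vecMulVec, kronecker_mulVec_vec_vecMulVec,
    one_sub_vecMulVec_self_mul_mulVec_eigenvector hvk heig,
    smul_one_add_smul_vecMulVec_self_mulVec hvk, one_mulVec, zero_vecMulVec, smul_vecMulVec,
    vec_zero, vec_smul, zero_sub, neg_mul, neg_smul]

/-- First class of eigenvectors of the Jacobian of the multiagent Oja flow at a consensus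
`v_k`: each block vector `p^ℓ` with `v_k` in block `ℓ` satisfies `F p^ℓ = −2λ_k p^ℓ`. -/
theorem jacobian_first_class_eigenvectors {d n : ℕ} (V : Matrix (Fin d) (Fin d) ℝ)
    (hV : V.IsSymm) (vk : Fin d → ℝ) (hvk : vk ⬝ᵥ vk = 1) (lamk : ℝ)
    (heig : V.mulVec vk = lamk • vk) (l : Fin n) :
    let F : Matrix (Fin n × Fin d) (Fin n × Fin d) ℝ :=
      (((1 : ℝ) / n) • (Matrix.of fun _ _ => (1 : ℝ) : Matrix (Fin n) (Fin n) ℝ)) ⊗ₖ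
          (((1 : Matrix (Fin d) (Fin d) ℝ) - vecMulVec vk vk) * V) -
        (1 : Matrix (Fin n) (Fin n) ℝ) ⊗ₖ
          (lamk • (1 : Matrix (Fin d) (Fin d) ℝ) + lamk • vecMulVec vk vk)
    let p : Fin n × Fin d → ℝ := fun q => if q.1 = l then vk q.2 else 0
    F.mulVec p = (-2 * lamk) • p :=
  jacobian_first_class_eigenvectors_general V vk hvk lamk heig l
end

section
/- With F as the Jacobian of the multiagent Oja flow at consensus v_k, any vector r = (z₁ᵀ,…,zₙᵀ)ᵀ with v_kᵀzᵢ = 0 for all i and Σᵢ zᵢ = 0 satisfies F r = −λ_k r. -/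
open Matrix Kronecker

/-!
Stack the `zᵢ` as the columns of `Z`, so that `r = vec Z` and `(A ⊗ₖ B) *ᵥ vec Z = vec (B Z Aᵀ)`.
With `J = (1/n) 𝟙𝟙ᵀ`, the first block gives `vec ((I - v vᵀ) V Z Jᵀ) = 0`, because the rows of `Z`
sum to `∑ᵢ zᵢ = 0`, and the second gives `vec (λ (I + v vᵀ) Z) = λ vec Z`, because `vᵀ Z = 0`.
-/

namespace Matrix

variable {m n p R : Type*}

theorem transpose_of_mul_const_eq_zero [Fintype n] [NonUnitalNonAssocSemiring R] {z : n → m → R}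
    (hz : ∑ i, z i = 0) (c : R) : (of z)ᵀ * of (fun (_ : n) (_ : p) => c) = 0 := by
  ext a k
  simp only [mul_apply, transpose_apply, of_apply, ← Finset.sum_mul, zero_apply]
  rw [← Finset.sum_apply, hz, Pi.zero_apply, zero_mul]

theorem vecMulVec_mul_transpose_of_eq_zero [NonUnitalCommSemiring R] [Fintype m]
    (u : p → R) {v : m → R} {z : n → m → R} (hz : ∀ i, v ⬝ᵥ z i = 0) :
    vecMulVec u v * (of z)ᵀ = 0 := by
  have hvZ : v ᵥ* (of z)ᵀ = 0 := by
    rw [vecMul_transpose]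
    exact funext fun i => (dotProduct_comm _ _).trans (hz i)
  rw [vecMulVec_mul, hvZ]
  exact funext₂ fun _ _ => mul_zero _

end Matrix

theorem jacobian_third_class_eigenvectors_general {d n : ℕ} (V : Matrix (Fin d) (Fin d) ℝ)
    (vk : Fin d → ℝ) (lamk : ℝ) (z : Fin n → Fin d → ℝ)
    (horth : ∀ i, vk ⬝ᵥ z i = 0) (hsum : ∑ i, z i = 0) :
    let F : Matrix (Fin n × Fin d) (Fin n × Fin d) ℝ :=
      (((1 : ℝ) / n) • (Matrix.of fun _ _ => (1 : ℝ) : Matrix (Fin n) (Fin n) ℝ)) ⊗ₖ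
          (((1 : Matrix (Fin d) (Fin d) ℝ) - vecMulVec vk vk) * V) -
        (1 : Matrix (Fin n) (Fin n) ℝ) ⊗ₖ
          (lamk • (1 : Matrix (Fin d) (Fin d) ℝ) + lamk • vecMulVec vk vk)
    let r : Fin n × Fin d → ℝ := fun p => z p.1 p.2
    F.mulVec r = (-lamk) • r := by
  intro F r
  set Z : Matrix (Fin d) (Fin n) ℝ := (of z)ᵀ
  have hr : r = vec Z := rfl
  have hJ : Z * ((1 / (n : ℝ)) • of fun (_ : Fin n) (_ : Fin n) => (1 : ℝ))ᵀ = 0 := by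
    rw [transpose_smul, Matrix.mul_smul]
    exact (congrArg _ (transpose_of_mul_const_eq_zero hsum 1)).trans (smul_zero _)
  have hC : (lamk • (1 : Matrix (Fin d) (Fin d) ℝ) + lamk • vecMulVec vk vk) * Z = lamk • Z := by
    rw [Matrix.add_mul, Matrix.smul_mul, Matrix.smul_mul, Matrix.one_mul,
      vecMulVec_mul_transpose_of_eq_zero vk horth, smul_zero, add_zero]
  rw [hr, sub_mulVec, kronecker_mulVec_vec, kronecker_mulVec_vec, Matrix.mul_assoc, hJ,
    Matrix.mul_zero, hC, transpose_one, Matrix.mul_one, vec_zero, zero_sub, vec_smul, neg_smul]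

/-- Third class of eigenvectors of the Jacobian at consensus `v_k`: any stacked vector
`r = (z₁,…,zₙ)` with `v_kᵀzᵢ = 0` and `∑ᵢ zᵢ = 0` satisfies `F r = −λ_k r`. -/
theorem jacobian_third_class_eigenvectors {d n : ℕ} (V : Matrix (Fin d) (Fin d) ℝ)
    (hV : V.IsSymm) (vk : Fin d → ℝ) (hvk : vk ⬝ᵥ vk = 1) (lamk : ℝ)
    (heig : V.mulVec vk = lamk • vk) (z : Fin n → Fin d → ℝ)
    (horth : ∀ i, vk ⬝ᵥ z i = 0) (hsum : ∑ i, z i = 0) :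
    let F : Matrix (Fin n × Fin d) (Fin n × Fin d) ℝ :=
      (((1 : ℝ) / n) • (Matrix.of fun _ _ => (1 : ℝ) : Matrix (Fin n) (Fin n) ℝ)) ⊗ₖ
          (((1 : Matrix (Fin d) (Fin d) ℝ) - vecMulVec vk vk) * V) -
        (1 : Matrix (Fin n) (Fin n) ℝ) ⊗ₖ
          (lamk • (1 : Matrix (Fin d) (Fin d) ℝ) + lamk • vecMulVec vk vk)
    let r : Fin n × Fin d → ℝ := fun p => z p.1 p.2
    F.mulVec r = (-lamk) • r :=
  jacobian_third_class_eigenvectors_general V vk lamk z horth hsum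
end

section
/- At a bipartite consensus configuration where xᵢ = v for i in a set of size n₁ and xᵢ = −v for the remaining n₂ = n − n₁ indices (0 < n₁ < n), the attention matrix A(x) has exactly rank 2, provided α₁ ≠ α₂ where α₁ = e^{vᵀQᵀKv} and α₂ = e^{−vᵀQᵀKv}, i.e., provided vᵀQᵀKv ≠ 0. -/
/-!
Normalising the rows is left multiplication by an invertible diagonal matrix, so `A` has the
rank of `(exp ⟨Qxᵢ, Kxⱼ⟩)ᵢⱼ`. This matrix is the `2 × 2` matrix `!![e^c, e^-c; e^-c, e^c]`,
`c = vᵀQᵀKv`, with its rows and columns repeated according to the sign of `xᵢ`, and repeating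
rows and columns does not change the rank. Its determinant `e^{2c} - e^{-2c}` vanishes only
for `c = 0`.
-/

open Matrix

namespace Matrix

variable {m n m₀ n₀ R : Type*} [Fintype n] [Fintype n₀]

theorem rank_submatrix_of_surjective [CommSemiring R] [StrongRankCondition R]
    (A : Matrix m n R) {r : m₀ → m} {c : n₀ → n} (hr : r.Surjective) (hc : c.Surjective) :
    (A.submatrix r c).rank = A.rank := by
  refine le_antisymm (rank_submatrix_le A r c) ?_
  calc A.rank
      = ((A.submatrix r c).submatrix (Function.surjInv hr) (Function.surjInv hc)).rank := by
        rw [submatrix_submatrix, Function.comp_surjInv, Function.comp_surjInv, submatrix_id_id]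
    _ ≤ (A.submatrix r c).rank := rank_submatrix_le _ _ _

end Matrix

section Softmax

variable {m n : Type*} [Fintype m] [Fintype n]

noncomputable def rowSoftmax (S : Matrix m n ℝ) : Matrix m n ℝ :=
  Matrix.of fun i j => Real.exp (S i j) / ∑ l, Real.exp (S i l)

theorem rowSoftmax_eq_diagonal_mul [DecidableEq m] (S : Matrix m n ℝ) :
    rowSoftmax S = diagonal (fun i => (∑ l, Real.exp (S i l))⁻¹) * S.map Real.exp := by
  ext i j
  simp [rowSoftmax, div_eq_inv_mul]

theorem rank_rowSoftmax [Nonempty n] (S : Matrix m n ℝ) :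
    (rowSoftmax S).rank = (S.map Real.exp).rank := by
  classical
  have hsum_ne_zero (i : m) : ∑ l, Real.exp (S i l) ≠ 0 :=
    (Finset.sum_pos (fun l _ => Real.exp_pos _) Finset.univ_nonempty).ne'
  rw [rowSoftmax_eq_diagonal_mul]
  refine rank_mul_eq_right_of_det_ne_zero _ _ ?_
  rw [det_diagonal]
  exact Finset.prod_ne_zero_iff.2 fun i _ => inv_ne_zero (hsum_ne_zero i)

end Softmax

theorem map_exp_scores_pm {d : ℕ} (Q K : Matrix (Fin d) (Fin d) ℝ) (v : Fin d → ℝ) :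
    (Matrix.of fun p q : Fin 2 => Q *ᵥ ![v, -v] p ⬝ᵥ K *ᵥ ![v, -v] q).map Real.exp =
      !![Real.exp (Q *ᵥ v ⬝ᵥ K *ᵥ v), Real.exp (-(Q *ᵥ v ⬝ᵥ K *ᵥ v));
        Real.exp (-(Q *ᵥ v ⬝ᵥ K *ᵥ v)), Real.exp (Q *ᵥ v ⬝ᵥ K *ᵥ v)] := by
  ext p q
  fin_cases p <;> fin_cases q <;> simp [mulVec_neg]

theorem rank_exp_pm_fin_two {c : ℝ} (hc : c ≠ 0) :
    (!![Real.exp c, Real.exp (-c); Real.exp (-c), Real.exp c]).rank = 2 := by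
  refine (rank_of_det_ne_zero ?_).trans (Fintype.card_fin 2)
  rw [det_fin_two_of, ← Real.exp_add, ← Real.exp_add, sub_ne_zero]
  intro h
  exact hc (by linarith [Real.exp_injective h])

theorem attention_matrix_at_bipartite_consensus_general {d n : ℕ}
    (Q K : Matrix (Fin d) (Fin d) ℝ) (v : Fin d → ℝ)
    (hQK : Q.mulVec v ⬝ᵥ K.mulVec v ≠ 0)
    (n₁ : ℕ) (h1 : 1 ≤ n₁) (h2 : n₁ ≤ n - 1)
    (x : Fin n → Fin d → ℝ)
    (hx : ∀ i : Fin n, x i = if (i : ℕ) < n₁ then v else -v) :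
    let A : Matrix (Fin n) (Fin n) ℝ := Matrix.of fun i j =>
      Real.exp (Q.mulVec (x i) ⬝ᵥ K.mulVec (x j)) /
        ∑ l, Real.exp (Q.mulVec (x i) ⬝ᵥ K.mulVec (x l))
    A.rank = 2 := by
  let side : Fin n → Fin 2 := fun i => if (i : ℕ) < n₁ then 0 else 1
  have hside : side.Surjective := by
    intro p
    fin_cases p
    · exact ⟨⟨0, by omega⟩, by simp [side]; omega⟩
    · exact ⟨⟨n₁, by omega⟩, by simp [side]⟩
  have hx_side : x = ![v, -v] ∘ side := by
    funext i
    rw [hx i]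
    split_ifs with hi <;> simp [side, hi]
  have : Nonempty (Fin n) := ⟨⟨0, by omega⟩⟩
  subst hx_side
  change (rowSoftmax ((Matrix.of fun p q : Fin 2 => Q *ᵥ ![v, -v] p ⬝ᵥ K *ᵥ ![v, -v] q).submatrix
    side side)).rank = 2
  rw [rank_rowSoftmax, ← submatrix_map, rank_submatrix_of_surjective _ hside hside,
    map_exp_scores_pm, rank_exp_pm_fin_two hQK]

/-- At a bipartite consensus configuration (`xᵢ = v` for `i < n₁`, `xᵢ = −v` otherwise,
with `0 < n₁ < n`) and `vᵀQᵀKv ≠ 0`, the attention matrix has rank exactly 2. -/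
theorem attention_matrix_at_bipartite_consensus {d n : ℕ}
    (Q K : Matrix (Fin d) (Fin d) ℝ) (v : Fin d → ℝ) (hv : v ⬝ᵥ v = 1)
    (hQK : Q.mulVec v ⬝ᵥ K.mulVec v ≠ 0)
    (n₁ : ℕ) (h1 : 1 ≤ n₁) (h2 : n₁ ≤ n - 1) (hn : 0 < n)
    (x : Fin n → Fin d → ℝ)
    (hx : ∀ i : Fin n, x i = if (i : ℕ) < n₁ then v else -v) :
    let A : Matrix (Fin n) (Fin n) ℝ := Matrix.of fun i j =>
      Real.exp (Q.mulVec (x i) ⬝ᵥ K.mulVec (x j)) /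
        ∑ l, Real.exp (Q.mulVec (x i) ⬝ᵥ K.mulVec (x l))
    A.rank = 2 :=
  attention_matrix_at_bipartite_consensus_general Q K v hQK n₁ h1 h2 x hx
end
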